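/- arXiv:2212.00759 — 2 statements merged into one kernel-verified Lean document; each statement's English description precedes it below -/
import Mathlib

section
/- Let p : I^d → ℝ be a finite-rank probability density, and for 1 ≤ k ≤ d−1 let Φ_k(x_{1:k}; α_k), α_k = 1,…,r_k, be the first r_k left singular functions of the reshaped kernel p(x_{1:k}; x_{k+1:d}) of rank r_k. Then the system of core determining equations G_1(x_1;α_1) = Φ_1(x_1;α_1), Σ_{α_{k-1}} Φ_{k-1}(x_{1:k-1};α_{k-1}) G_k(α_{k-1};x_k,α_k) = Φ_k(x_{1:k-1};x_k,α_k) for 2 ≤ k ≤ d−1, and Σ_{α_{d-1}} Φ_{d-1}(x_{1:d-1};α_{d-1}) G_d(α_{d-1};x_d) = p(x_{1:d-1};x_d), has a unique solution (G_1,…,G_d), and these cores give the exact tensor-train representation p(x) = G_1(x_1,:) G_2(:,x_2,:) ⋯ G_d(:,x_d). -/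
open MeasureTheory BigOperators

/-!
Orthonormality of the left singular functions `Φ_k` makes them linearly independent, which gives
uniqueness of the cores. For existence, contracting `Φ_{k+1}(x_{1:k}, x_{k+1}; ·)` against the
vector `(σ_{k+1} Ψ_{k+1}(·; z))` gives `p(x_{1:k}; x_{k+1}, z)`, which the `k`-th decomposition
writes as a combination of the `Φ_k(x_{1:k}; ·)`. As `z` varies these vectors span
`ℝ^{r_{k+1}}`, since the `Ψ_{k+1}` are orthonormal, so each `Φ_{k+1}(·, x_{k+1}; β)` lies in the
span of the `Φ_k`; the coefficients are the core `G_{k+1}`. Orthonormality only yields linear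
independence of measurable functions; the `Ψ_k` inherit measurability from `p`, because almost
every slice of the reshaped density is measurable and the slices span the `Ψ_k`.
Telescoping the equations then gives `p = G_1 ⋯ G_d`.
-/

/-- Value of a continuous tensor-train with functional cores `G` and ranks `r`:
`G₁(x₁,:) G₂(:,x₂,:) ⋯ G_d(:,x_d)` (boundary ranks `r 0 = r d = 1`). -/
noncomputable def ttValC {d : ℕ} (r : ℕ → ℕ)
    (G : ∀ j : Fin d, ℝ → Matrix (Fin (r j)) (Fin (r (j + 1))) ℝ)
    (x : Fin d → ℝ) : ℝ :=
  ∑ α : ∀ k : Fin (d + 1), Fin (r k),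
    ∏ j : Fin d, G j (x j) (α j.castSucc) (α j.succ)

def AELinearIndependent {ι X : Type*} [Fintype ι] [MeasurableSpace X] (μ : Measure X)
    (f : ι → X → ℝ) : Prop :=
  ∀ c : ι → ℝ, (∀ᵐ x ∂μ, ∑ i, c i * f i x = 0) → c = 0

theorem Submodule.span_eq_top_of_forall_dotProduct_eq_zero {K ι : Type*} [Field K] [Fintype ι]
    {s : Set (ι → K)} (h : ∀ d : ι → K, (∀ v ∈ s, d ⬝ᵥ v = 0) → d = 0) :
    Submodule.span K s = ⊤ := by
  classical
  by_contra hne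
  obtain ⟨f, hf0, hle⟩ := Submodule.exists_le_ker_of_lt_top _ (lt_top_iff_ne_top.2 hne)
  refine hf0 (LinearMap.ext fun x => ?_)
  have hd := h (fun i => f fun j => if i = j then 1 else 0) fun v hv => by
    simpa [dotProduct, LinearMap.pi_apply_eq_sum_univ f v, mul_comm] using
      hle (Submodule.subset_span hv)
  simp [LinearMap.pi_apply_eq_sum_univ f x, funext_iff.1 hd]

section Orthonormal

variable {ι X : Type*} [DecidableEq ι] [MeasurableSpace X] {μ : Measure X} {f : ι → X → ℝ}

theorem integral_sum_mul_of_orthonormal [Fintype ι]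
    (hint : ∀ i j, Integrable (fun x => f i x * f j x) μ)
    (hon : ∀ i j, ∫ x, f i x * f j x ∂μ = if i = j then 1 else 0) (c : ι → ℝ) (j : ι) :
    ∫ x, (∑ i, c i * f i x) * f j x ∂μ = c j := by
  classical
  simp_rw [Finset.sum_mul, mul_assoc]
  rw [integral_finsetSum _ fun i _ => (hint i j).const_mul (c i)]
  simp [integral_const_mul, hon]

theorem aeLinearIndependent_of_orthonormal [Fintype ι]
    (hint : ∀ i j, Integrable (fun x => f i x * f j x) μ)
    (hon : ∀ i j, ∫ x, f i x * f j x ∂μ = if i = j then 1 else 0) :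
    AELinearIndependent μ f := by
  intro c hc
  funext j
  rw [← integral_sum_mul_of_orthonormal hint hon c j, Pi.zero_apply]
  exact integral_eq_zero_of_ae (hc.mono fun x hx => by simp [hx])

theorem integrable_mul_of_orthonormal (hf : ∀ i, AEStronglyMeasurable (f i) μ)
    (hon : ∀ i j, ∫ x, f i x * f j x ∂μ = if i = j then 1 else 0) (i j : ι) :
    Integrable (fun x => f i x * f j x) μ := by
  have hL2 : ∀ i, MemLp (f i) 2 μ := fun i => by
    refine (memLp_two_iff_integrable_sq (hf i)).2 (Integrable.of_integral_ne_zero ?_)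
    simp [sq, hon]
  exact (hL2 i).integrable_mul (hL2 j)

end Orthonormal

namespace AELinearIndependent

variable {ι X : Type*} [Fintype ι] [MeasurableSpace X] {μ : Measure X} {f : ι → X → ℝ}

theorem mul_left (hf : AELinearIndependent μ f) {σ : ι → ℝ} (hσ : ∀ i, σ i ≠ 0) :
    AELinearIndependent μ (fun i x => σ i * f i x) := by
  intro c hc
  have := hf (fun i => c i * σ i) (hc.mono fun x hx => by simpa [mul_assoc] using hx)
  funext i
  simpa [hσ i] using congrFun this i

theorem eq_of_forall_sum_mul_eq (hf : AELinearIndependent μ f) {a b : ι → ℝ}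
    (h : ∀ x, ∑ i, f i x * a i = ∑ i, f i x * b i) : a = b := by
  refine sub_eq_zero.1 (hf _ (Filter.Eventually.of_forall fun x => ?_))
  simp only [Pi.sub_apply, mul_comm (_ - _) (f _ x), mul_sub, Finset.sum_sub_distrib, h x,
    sub_self]

theorem span_image_eq_top (hf : AELinearIndependent μ f) {S : Set X} (hS : ∀ᵐ x ∂μ, x ∈ S) :
    Submodule.span ℝ ((fun x i => f i x) '' S) = ⊤ := by
  refine Submodule.span_eq_top_of_forall_dotProduct_eq_zero fun d hd => hf d ?_
  filter_upwards [hS] with x hx using hd _ ⟨x, hx, rfl⟩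

theorem aestronglyMeasurable_of_sum_mul_eq [DecidableEq ι] {Y : Type*} [MeasurableSpace Y]
    {ν : Measure Y} [SFinite ν] (hf : AELinearIndependent μ f) {g : ι → Y → ℝ} {F : X × Y → ℝ}
    (hF : AEStronglyMeasurable F (μ.prod ν)) (hFfg : ∀ x y, F (x, y) = ∑ i, f i x * g i y)
    (i : ι) : AEStronglyMeasurable (g i) ν := by
  have hspan : ∀ c ∈ Submodule.span ℝ
      ((fun x i => f i x) '' {x | AEStronglyMeasurable (fun y => F (x, y)) ν}),
      AEStronglyMeasurable (fun y => ∑ j, c j * g j y) ν := by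
    intro c hc
    induction hc using Submodule.span_induction with
    | mem c hc =>
      obtain ⟨x, hx, rfl⟩ := hc
      simpa [hFfg] using hx
    | zero => simpa using aestronglyMeasurable_const
    | add c d _ _ hc hd =>
      convert hc.add hd using 1
      ext y
      simp [add_mul, Finset.sum_add_distrib]
    | smul t c _ hc =>
      convert hc.const_mul t using 1
      ext y
      simp [mul_assoc, Finset.mul_sum]
  rw [hf.span_image_eq_top (S := {x | AEStronglyMeasurable (fun y => F (x, y)) ν})
    hF.prodMk_left] at hspan
  simpa [Pi.single_apply] using hspan (Pi.single i 1) Submodule.mem_top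

theorem mem_of_forall_sum_mul_mem {Z : Type*} (hf : AELinearIndependent μ f)
    {A : Submodule ℝ (Z → ℝ)} {g : ι → Z → ℝ} (h : ∀ x, (fun z => ∑ i, g i z * f i x) ∈ A)
    (i : ι) : g i ∈ A := by
  classical
  have hle : Submodule.span ℝ ((fun x i => f i x) '' Set.univ) ≤
      A.comap (Fintype.linearCombination ℝ g) := by
    refine Submodule.span_le.2 ?_
    rintro _ ⟨x, -, rfl⟩
    rw [SetLike.mem_coe, Submodule.mem_comap]
    convert h x using 1
    ext z
    simp [Fintype.linearCombination_apply, mul_comm]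
  rw [hf.span_image_eq_top (S := Set.univ) (ae_of_all _ fun _ => trivial)] at hle
  simpa using hle (Submodule.mem_top (x := Pi.single i 1))

end AELinearIndependent

/-- Concatenation `(u, z)` read on the first `n` coordinates. Only `n ≤ k + l` is required, so that
the reshapings in the statement are instances of `glue` without casts along `k + (n - k) = n`. -/
def glue {α : Type*} {k l n : ℕ} (hn : n ≤ k + l) (u : Fin k → α) (z : Fin l → α) : Fin n → α :=
  fun m => if h : (m : ℕ) < k then u ⟨m, h⟩ else z ⟨m - k, by have := m.isLt; omega⟩

section Glue

variable {α : Type*} {k l n : ℕ}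

theorem glue_glue {j k' l' : ℕ} (h₁ : n ≤ k' + l) (h₂ : k' ≤ k + j) (h₃ : n ≤ k + l')
    (h₄ : l' ≤ j + l) (hk : k' = k + j) (u : Fin k → α) (v : Fin j → α) (w : Fin l → α) :
    glue h₁ (glue h₂ u v) w = glue h₃ u (glue h₄ v w) := by
  funext m
  simp only [glue]
  split_ifs <;> first | rfl | omega | (congr 1; ext; simp only; omega)

theorem glue_castLE (y : Fin n → α) (hk : k < n) {i : Fin n} (hi : (i : ℕ) = k) :
    glue (le_refl (k + 1)) (fun j : Fin k => y (Fin.castLE hk.le j)) (fun _ : Fin 1 => y i) =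
      fun j : Fin (k + 1) => y (Fin.castLE hk j) := by
  funext m
  simp only [glue]
  split_ifs <;> first | rfl | (congr 1; ext; simp only [Fin.val_castLE]; omega)

theorem measurePreserving_glue [MeasurableSpace α] (μ : Measure α) [SigmaFinite μ]
    (h : k + l = n) :
    MeasurePreserving (fun q : (Fin k → α) × (Fin l → α) => glue h.ge q.1 q.2)
      ((Measure.pi fun _ => μ).prod (Measure.pi fun _ => μ)) (Measure.pi fun _ => μ) := by
  have hcomp := (measurePreserving_piCongrLeft (fun _ : Fin n => μ)
    (finSumFinEquiv.trans (finCongr h))).comp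
    (measurePreserving_sumPiEquivProdPi_symm (fun _ : Fin k ⊕ Fin l => μ))
  subst h
  convert hcomp using 1
  ext q m
  induction m using Fin.addCases <;>
    simp [glue, MeasurableEquiv.piCongrLeft, Equiv.piCongrLeft_apply_eq_cast,
      MeasurableEquiv.coe_sumPiEquivProdPi_symm, Equiv.sumPiEquivProdPi]

end Glue

/-- The sum of the entries of `f 0 * ⋯ * f (n - 1) *ᵥ v`, expanded over index paths. -/
def pathSum (r : ℕ → ℕ) {n : ℕ} (f : ∀ j : Fin n, Matrix (Fin (r j)) (Fin (r (j + 1))) ℝ)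
    (v : Fin (r n) → ℝ) : ℝ :=
  ∑ α : ∀ k : Fin (n + 1), Fin (r k),
    (∏ j : Fin n, f j (α j.castSucc) (α j.succ)) * v (α (Fin.last n))

section PathSum

variable (r : ℕ → ℕ)

theorem pathSum_zero (f : ∀ j : Fin 0, Matrix (Fin (r j)) (Fin (r (j + 1))) ℝ)
    (v : Fin (r 0) → ℝ) : pathSum r f v = ∑ i, v i := by
  simpa [pathSum] using (Equiv.piUnique fun k : Fin 1 => Fin (r k)).sum_comp v

theorem pathSum_succ {n : ℕ} (f : ∀ j : Fin (n + 1), Matrix (Fin (r j)) (Fin (r (j + 1))) ℝ)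
    (v : Fin (r (n + 1)) → ℝ) :
    pathSum r f v =
      pathSum r (fun j => f j.castSucc) fun m => ∑ c, f (Fin.last n) m c * v c := by
  rw [pathSum, ← (Fin.snocEquiv fun k => Fin (r k)).sum_comp, Fintype.sum_prod_type,
    Finset.sum_comm]
  simp only [pathSum, Fin.snocEquiv, Equiv.coe_fn_mk, Fin.prod_univ_castSucc, Fin.snoc_castSucc,
    Fin.succ_last, Fin.snoc_last, Finset.mul_sum, mul_assoc]
  refine Finset.sum_congr rfl fun α _ => Finset.sum_congr rfl fun c _ => ?_
  congr 2 with i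
  exact congrArg _ (Fin.snoc_castSucc (α := fun k => Fin (r k)) c α i.succ)

theorem ttValC_eq_pathSum {d : ℕ} (G : ∀ j : Fin d, ℝ → Matrix (Fin (r j)) (Fin (r (j + 1))) ℝ)
    (x : Fin d → ℝ) : ttValC r G x = pathSum r (fun j => G j (x j)) fun _ => 1 := by
  simp [ttValC, pathSum]

end PathSum

section SingularFunctions

variable {n r : ℕ} {μ : Measure ℝ} {p : (Fin n → ℝ) → ℝ}

theorem aeLinearIndependent_singular_right [SigmaFinite μ] {k : ℕ} (hk : k ≤ n)
    (hp : AEStronglyMeasurable p (Measure.pi fun _ => μ)) {σ : Fin r → ℝ}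
    {Φ : (Fin k → ℝ) → Fin r → ℝ} {Ψ : Fin r → (Fin (n - k) → ℝ) → ℝ}
    (hSVD : ∀ u z, p (glue le_add_tsub u z) = ∑ α, σ α * Φ u α * Ψ α z)
    (hσ : ∀ α, σ α ≠ 0) (hΦ : AELinearIndependent (Measure.pi fun _ => μ) fun α u => Φ u α)
    (hΨ : ∀ α β, ∫ z, Ψ α z * Ψ β z ∂(Measure.pi fun _ => μ) = if α = β then 1 else 0) :
    AELinearIndependent (Measure.pi fun _ => μ) fun α z => σ α * Ψ α z := by
  have hF := hp.comp_measurePreserving (measurePreserving_glue μ (Nat.add_sub_cancel' hk))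
  have hmeas := (hΦ.mul_left hσ).aestronglyMeasurable_of_sum_mul_eq (g := Ψ) hF
    fun u z => by simp [hSVD, mul_comm (σ _)]
  exact (aeLinearIndependent_of_orthonormal (integrable_mul_of_orthonormal hmeas hΨ) hΨ).mul_left hσ

theorem exists_matrix_of_svd {m r' : ℕ} {σ : Fin r → ℝ} {σ' : Fin r' → ℝ}
    {Φ : (Fin m → ℝ) → Fin r → ℝ} {Φ' : (Fin (m + 1) → ℝ) → Fin r' → ℝ}
    {Ψ : Fin r → (Fin (n - m) → ℝ) → ℝ} {Ψ' : Fin r' → (Fin (n - (m + 1)) → ℝ) → ℝ}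
    (hSVD : ∀ u z, p (glue le_add_tsub u z) = ∑ α, σ α * Φ u α * Ψ α z)
    (hSVD' : ∀ u z, p (glue le_add_tsub u z) = ∑ α, σ' α * Φ' u α * Ψ' α z)
    {ν : Measure (Fin (n - (m + 1)) → ℝ)} (hΨ' : AELinearIndependent ν fun α z => σ' α * Ψ' α z)
    (x : ℝ) :
    ∃ M : Matrix (Fin r) (Fin r') ℝ,
      ∀ u β, ∑ c, Φ u c * M c β = Φ' (glue (by omega) u fun _ : Fin 1 => x) β := by
  have hcontract : ∀ z,
      (fun u => ∑ β, Φ' (glue (by omega) u fun _ : Fin 1 => x) β * (σ' β * Ψ' β z)) =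
        ∑ c, (σ c * Ψ c (glue (by omega) (fun _ : Fin 1 => x) z)) • fun u => Φ u c := by
    intro z
    ext u
    rw [Finset.sum_apply]
    calc ∑ β, Φ' (glue _ u fun _ : Fin 1 => x) β * (σ' β * Ψ' β z)
        = p (glue le_add_tsub (glue (by omega) u fun _ : Fin 1 => x) z) := by
          rw [hSVD']
          exact Finset.sum_congr rfl fun _ _ => by ring
      _ = p (glue le_add_tsub u (glue (by omega) (fun _ : Fin 1 => x) z)) := by
          rw [glue_glue _ _ _ _ rfl]
      _ = _ := by
          rw [hSVD]
          exact Finset.sum_congr rfl fun _ _ => by simp only [Pi.smul_apply, smul_eq_mul]; ring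
  have hmem := hΨ'.mem_of_forall_sum_mul_mem (A := Submodule.span ℝ (Set.range fun c u => Φ u c))
    (g := fun β u => Φ' (glue (by omega) u fun _ : Fin 1 => x) β) fun z => by
      rw [hcontract z]
      exact Submodule.sum_mem _ fun c _ => Submodule.smul_mem _ _ (Submodule.subset_span ⟨c, rfl⟩)
  choose M hM using fun β => (Submodule.mem_span_range_iff_exists_fun ℝ).1 (hmem β)
  exact ⟨fun c β => M β c, fun u β => by simpa [mul_comm] using congrFun (hM β) u⟩

end SingularFunctions

/-- Cores are indexed from `0`: `G ⟨k, _⟩` is the paper's `G_{k+1}`. -/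
def CoreEquations {e : ℕ} {r : ℕ → ℕ} (Φ : (k : ℕ) → (Fin k → ℝ) → Fin (r k) → ℝ)
    (p : (Fin (e + 2) → ℝ) → ℝ)
    (G : ∀ j : Fin (e + 2), ℝ → Matrix (Fin (r j)) (Fin (r (j + 1))) ℝ) : Prop :=
  (∀ (x : ℝ) (c : Fin (r 0)) (β : Fin (r 1)), G ⟨0, by omega⟩ x c β = Φ 1 (fun _ => x) β) ∧
  (∀ (k : ℕ) (hk : k + 2 ≤ e + 1) (u : Fin (k + 1) → ℝ) (x : ℝ) (β : Fin (r (k + 2))),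
    ∑ c, Φ (k + 1) u c * G ⟨k + 1, by omega⟩ x c β =
      Φ (k + 2) (glue (by omega) u fun _ : Fin 1 => x) β) ∧
  (∀ (u : Fin (e + 1) → ℝ) (x : ℝ) (β : Fin (r (e + 2))),
    ∑ c, Φ (e + 1) u c * G ⟨e + 1, by omega⟩ x c β = p (glue (by omega) u fun _ : Fin 1 => x))

namespace CoreEquations

variable {e : ℕ} {r : ℕ → ℕ} {Φ : (k : ℕ) → (Fin k → ℝ) → Fin (r k) → ℝ}
  {p : (Fin (e + 2) → ℝ) → ℝ} {G : ∀ j : Fin (e + 2), ℝ → Matrix (Fin (r j)) (Fin (r (j + 1))) ℝ}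

theorem unique {μ : Measure ℝ}
    (hΦ : ∀ k, 1 ≤ k → k ≤ e + 1 →
      AELinearIndependent (Measure.pi fun _ : Fin k => μ) fun α u => Φ k u α)
    {G' : ∀ j : Fin (e + 2), ℝ → Matrix (Fin (r j)) (Fin (r (j + 1))) ℝ}
    (hG : CoreEquations Φ p G) (hG' : CoreEquations Φ p G') : G = G' := by
  obtain ⟨hG₁, hG₂, hG₃⟩ := hG
  obtain ⟨hG'₁, hG'₂, hG'₃⟩ := hG'
  funext ⟨j, hj⟩ x
  ext c β
  rcases j with _ | k
  · exact (hG₁ x c β).trans (hG'₁ x c β).symm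
  rcases Nat.lt_or_ge k e with hk | hk
  · exact congrFun ((hΦ (k + 1) (by omega) (by omega)).eq_of_forall_sum_mul_eq fun u =>
      (hG₂ k (by omega) u x β).trans (hG'₂ k (by omega) u x β).symm) c
  · obtain rfl : k = e := by omega
    exact congrFun ((hΦ (k + 1) (by omega) (by omega)).eq_of_forall_sum_mul_eq fun u =>
      (hG₃ u x β).trans (hG'₃ u x β).symm) c

theorem _root_.exists_coreEquations {Ψ : (k : ℕ) → Fin (r k) → (Fin (e + 2 - k) → ℝ) → ℝ}
    {σ : (k : ℕ) → Fin (r k) → ℝ}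
    (hSVD : ∀ k, 1 ≤ k → k ≤ e + 1 → ∀ u z,
      p (glue le_add_tsub u z) = ∑ α, σ k α * Φ k u α * Ψ k α z)
    {ν : (k : ℕ) → Measure (Fin (e + 2 - k) → ℝ)}
    (hΨ : ∀ k, 1 ≤ k → k ≤ e + 1 → AELinearIndependent (ν k) fun α z => σ k α * Ψ k α z) :
    ∃ G, CoreEquations Φ p G := by
  choose M hM using fun m (h₁ : 1 ≤ m) (h₂ : m ≤ e) =>
    exists_matrix_of_svd (hSVD m h₁ (by omega)) (hSVD (m + 1) (by omega) (by omega))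
      (hΨ (m + 1) (by omega) (by omega))
  refine ⟨Fin.cases (fun x _ β => Φ 1 (fun _ => x) β) fun i x =>
    if h : (i : ℕ) < e then M (i + 1) (by omega) h x
    else Matrix.of fun c _ => σ (i + 1) c * Ψ (i + 1) c fun _ => x, fun _ _ _ => rfl, ?_, ?_⟩
  · intro k hk u x β
    show ∑ c, Φ (k + 1) u c * (if h : k < e then M (k + 1) (by omega) h x
      else Matrix.of fun c _ => σ (k + 1) c * Ψ (k + 1) c fun _ => x) c β = _
    rw [dif_pos (by omega)]
    exact hM (k + 1) _ _ x u β
  · intro u x β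
    show ∑ c, Φ (e + 1) u c * (if h : e < e then M (e + 1) (by omega) h x
      else Matrix.of fun c _ => σ (e + 1) c * Ψ (e + 1) c fun _ => x) c β = _
    rw [dif_neg (lt_irrefl e)]
    refine Eq.trans ?_ (hSVD (e + 1) (by omega) (by omega) u fun _ => x).symm
    exact Finset.sum_congr rfl fun _ _ => by rw [Matrix.of_apply]; ring

theorem pathSum_eq (hG : CoreEquations Φ p G) (h0 : r 0 = 1) (x : Fin (e + 2) → ℝ) :
    ∀ k (hk : k ≤ e) (w : Fin (r (k + 1)) → ℝ),
      pathSum r (fun j : Fin (k + 1) => G (Fin.castLE (by omega) j) (x (Fin.castLE (by omega) j))) w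
        = ∑ β, Φ (k + 1) (fun j => x (Fin.castLE (by omega) j)) β * w β
  | 0, _, w => by
    rw [pathSum_succ, pathSum_zero]
    have hx : (fun j : Fin 1 => x (Fin.castLE (by omega) j)) = fun _ => x ⟨0, by omega⟩ :=
      funext fun j => by rw [Fin.fin_one_eq_zero j]; rfl
    calc ∑ i, ∑ c, G ⟨0, by omega⟩ (x ⟨0, by omega⟩) i c * w c
        = ∑ _i : Fin (r 0), ∑ c, Φ 1 (fun _ => x ⟨0, by omega⟩) c * w c :=
          Finset.sum_congr rfl fun i _ => Finset.sum_congr rfl fun c _ => by rw [hG.1]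
      _ = _ := by simp [h0, hx]
  | k + 1, hk, w => by
    rw [pathSum_succ]
    refine (pathSum_eq hG h0 x k (by omega) _).trans ?_
    simp_rw [Finset.mul_sum, ← mul_assoc]
    rw [Finset.sum_comm]
    refine Finset.sum_congr rfl fun c _ => ?_
    rw [← Finset.sum_mul]
    congr 1
    exact (hG.2.1 k (by omega) _ _ c).trans (by rw [glue_castLE x (by omega) (by simp)])

theorem ttValC_eq (hG : CoreEquations Φ p G) (h0 : r 0 = 1) (hd : r (e + 2) = 1)
    (x : Fin (e + 2) → ℝ) : p x = ttValC r G x := by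
  rw [ttValC_eq_pathSum, pathSum_succ]
  refine Eq.symm ((hG.pathSum_eq h0 x e le_rfl _).trans ?_)
  have hcol : ∀ c, ∑ β, Φ (e + 1) (fun j => x (Fin.castLE (by omega) j)) β *
      G (Fin.last (e + 1)) (x (Fin.last (e + 1))) β c = p x := fun c =>
    (hG.2.2 _ _ c).trans (by rw [glue_castLE x (by omega) (i := Fin.last (e + 1)) (by simp)]; rfl)
  simp_rw [mul_one, Finset.mul_sum]
  rw [Finset.sum_comm]
  simp [hcol, hd]

end CoreEquations

/-- core determining equations, continuous case: let `p` be a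
finite-rank probability density on `I^d` (`I = [a,b]`, `d = e + 2 ≥ 2`), whose
reshapings `p(x_{1:k}; x_{k+1:d})` have singular value decompositions with
positive decreasing singular values `σ k` and `L²(I^k)`-orthonormal left
singular functions `Φ k` (and orthonormal right singular functions `Ψ k`).
Then the core determining equations `G₁ = Φ₁`, `Φ_{k−1} G_k = Φ_k`
(`2 ≤ k ≤ d−1`), `Φ_{d−1} G_d = p(x_{1:d−1}; x_d)` have a unique solution, and
any solution gives the exact tensor-train representation
`p(x) = G₁(x₁,:) ⋯ G_d(:,x_d)`. -/
theorem stmt_0 (e : ℕ) (a b : ℝ) (r : ℕ → ℕ)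
    (h0 : r 0 = 1) (hdd : r (e + 2) = 1)
    (p : (Fin (e + 2) → ℝ) → ℝ)
    (hpi : ∫ x, p x ∂(Measure.pi fun _ : Fin (e + 2) => volume.restrict (Set.Icc a b)) = 1)
    (Φ : (k : ℕ) → (Fin k → ℝ) → Fin (r k) → ℝ)
    (Ψ : (k : ℕ) → Fin (r k) → (Fin (e + 2 - k) → ℝ) → ℝ)
    (σ : (k : ℕ) → Fin (r k) → ℝ)
    (hσpos : ∀ k, 1 ≤ k → k ≤ e + 1 → ∀ α, 0 < σ k α)
    (hSVD : ∀ k, 1 ≤ k → k ≤ e + 1 →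
      ∀ (u : Fin k → ℝ) (z : Fin (e + 2 - k) → ℝ),
        p (fun m => if h : (m : ℕ) < k then u ⟨m, h⟩
            else z ⟨(m : ℕ) - k, by have := m.isLt; omega⟩)
          = ∑ α, σ k α * Φ k u α * Ψ k α z)
    (hΦInt : ∀ k, 1 ≤ k → k ≤ e + 1 → ∀ α β : Fin (r k),
      Integrable (fun u => Φ k u α * Φ k u β)
        (Measure.pi fun _ : Fin k => volume.restrict (Set.Icc a b)))
    (hΦON : ∀ k, 1 ≤ k → k ≤ e + 1 → ∀ α β : Fin (r k),
      (∫ u, Φ k u α * Φ k u β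
          ∂(Measure.pi fun _ : Fin k => volume.restrict (Set.Icc a b)))
        = if α = β then (1:ℝ) else 0)
    (hΨON : ∀ k, 1 ≤ k → k ≤ e + 1 → ∀ α β : Fin (r k),
      (∫ z, Ψ k α z * Ψ k β z
          ∂(Measure.pi fun _ : Fin (e + 2 - k) => volume.restrict (Set.Icc a b)))
        = if α = β then (1:ℝ) else 0) :
    let CDE : (∀ j : Fin (e + 2), ℝ →
        Matrix (Fin (r j)) (Fin (r (j + 1))) ℝ) → Prop := fun G =>
      (∀ (x : ℝ) (c : Fin (r 0)) (β : Fin (r 1)),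
        G ⟨0, by omega⟩ x c β = Φ 1 (fun _ => x) β) ∧
      (∀ (k : ℕ) (h2 : k + 2 ≤ e + 1),
        ∀ (u : Fin (k + 1) → ℝ) (x : ℝ) (β : Fin (r (k + 2))),
          (∑ c : Fin (r (k + 1)),
              Φ (k + 1) u c * G ⟨k + 1, by omega⟩ x c β)
            = Φ (k + 2)
                (fun j => if h : (j : ℕ) < k + 1 then u ⟨j, h⟩ else x) β) ∧
      (∀ (u : Fin (e + 1) → ℝ) (x : ℝ) (β : Fin (r (e + 2))),
        (∑ c : Fin (r (e + 1)),
            Φ (e + 1) u c * G ⟨e + 1, by omega⟩ x c β)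
          = p (fun m => if h : (m : ℕ) < e + 1 then u ⟨m, h⟩ else x))
    (∃! G, CDE G) ∧ (∀ G, CDE G → ∀ x, p x = ttValC r G x) := by
  intro CDE
  have hp : Integrable p (Measure.pi fun _ : Fin (e + 2) => volume.restrict (Set.Icc a b)) :=
    Integrable.of_integral_ne_zero (by simp [hpi])
  have hΦ : ∀ k, 1 ≤ k → k ≤ e + 1 → AELinearIndependent
      (Measure.pi fun _ : Fin k => volume.restrict (Set.Icc a b)) fun α u => Φ k u α :=
    fun k hk₁ hk₂ => aeLinearIndependent_of_orthonormal (hΦInt k hk₁ hk₂) (hΦON k hk₁ hk₂)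
  obtain ⟨G, hG⟩ := exists_coreEquations hSVD fun k hk₁ hk₂ =>
    aeLinearIndependent_singular_right (by omega) hp.aestronglyMeasurable (hSVD k hk₁ hk₂)
      (fun α => (hσpos k hk₁ hk₂ α).ne') (hΦ k hk₁ hk₂) (hΨON k hk₁ hk₂)
  exact ⟨⟨G, hG, fun G' hG' => CoreEquations.unique hΦ hG' hG⟩,
    fun G' hG' x => CoreEquations.ttValC_eq hG' h0 hdd x⟩
end

section
/- Conversely, if every unfolding F_k of a d-tensor F ∈ ℝ^{n×⋯×n} has rank at most r_k for 1 ≤ k ≤ d−1, then F admits an exact tensor-train representation F(i_1,…,i_d) = G_1(i_1,:) G_2(:,i_2,:) ⋯ G_d(:,i_d) with cores of ranks exactly rank(F_k). -/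
/-!
Factor each middle unfolding as `F_k = U_k V_k` with `r_k = rank F_k` inner columns and `V_k`
of full row rank, so that `V_k W_k = 1` for some `W_k`; at `k = 0` and `k = d` use the trivial
factorizations through a `1 × 1` block. The cores are `G_k(x) = V_k(·, x ⋯) W_{k+1}`. Since the
rows of `F_{k+1}` indexed by `(a, x)` are the rows of `F_k` indexed by `a`, restricted to
columns starting with `x`, one gets `U_{k+1}(a x) = F_{k+1}(a x) W_{k+1} = U_k(a) G_k(x)`.
By induction the partial products `G_0(i_1) ⋯ G_{k-1}(i_k)` equal `U_k(i_1 ⋯ i_k)`, and at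
`k = d` this is `F`.
-/

open BigOperators

/-- Value of a discrete tensor-train with cores `G` and ranks `r` at a
multi-index `i`. -/
noncomputable def ttVal {d n : ℕ} (r : ℕ → ℕ)
    (G : ∀ j : Fin d, Fin n → Matrix (Fin (r j)) (Fin (r (j + 1))) ℝ)
    (i : Fin d → Fin n) : ℝ :=
  ∑ α : ∀ k : Fin (d + 1), Fin (r k),
    ∏ j : Fin d, G j (i j) (α j.castSucc) (α j.succ)

/-- The `k`-th unfolding of a `d`-tensor. -/
def unfold {d n : ℕ} (P : (Fin d → Fin n) → ℝ) (k : ℕ) (hk : k ≤ d) :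
    Matrix (Fin k → Fin n) (Fin (d - k) → Fin n) ℝ :=
  fun a b => P fun m =>
    if h : (m : ℕ) < k then a ⟨m, h⟩
    else b ⟨(m : ℕ) - k, by have := m.isLt; omega⟩

theorem Matrix.exists_mul_eq_and_mul_eq_one_of_rank_eq {K M P : Type*} [Field K] [Fintype M]
    [Fintype P] [DecidableEq P] (A : Matrix M P K) {m : ℕ} (hm : A.rank = m) :
    ∃ (U : Matrix M (Fin m) K) (V : Matrix (Fin m) P K) (W : Matrix P (Fin m) K),
      A = U * V ∧ V * W = 1 := by
  let S := LinearMap.range A.mulVecLin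
  let b : Module.Basis (Fin m) K S := Module.finBasisOfFinrankEq K S hm
  let p : (P → K) →ₗ[K] Fin m → K := b.equivFun.toLinearMap ∘ₗ A.mulVecLin.rangeRestrict
  obtain ⟨g, hg⟩ := p.exists_rightInverse_of_surjective
    (LinearMap.range_eq_top.mpr (b.equivFun.surjective.comp A.mulVecLin.surjective_rangeRestrict))
  refine ⟨LinearMap.toMatrix' (S.subtype ∘ₗ b.equivFun.symm.toLinearMap),
    LinearMap.toMatrix' p, LinearMap.toMatrix' g, ?_, ?_⟩
  · have hp : S.subtype ∘ₗ b.equivFun.symm.toLinearMap ∘ₗ p = A.mulVecLin := by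
      ext v
      simp [p, S]
    rw [← LinearMap.toMatrix'_comp, LinearMap.comp_assoc, hp, ← Matrix.toLin'_apply',
      LinearMap.toMatrix'_toLin']
  · rw [← LinearMap.toMatrix'_comp, hg, LinearMap.toMatrix'_id]

theorem Matrix.exists_eq_mul_of_unique_rows {K M P : Type*} [CommSemiring K] [Unique M]
    [Fintype P] (A : Matrix M P K) {m : ℕ} (hm : m = 1) :
    ∃ (U : Matrix M (Fin m) K) (V : Matrix (Fin m) P K), A = U * V ∧ ∀ a β, U a β = 1 := by
  subst hm
  refine ⟨Matrix.of fun _ _ => 1, Matrix.of fun _ b => A default b, ?_, fun _ _ => rfl⟩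
  ext a b
  simp [Matrix.mul_apply, Unique.eq_default a]

theorem Matrix.exists_eq_mul_of_unique_cols {K M P : Type*} [CommSemiring K] [Fintype M]
    [Fintype P] [Unique P] (A : Matrix M P K) {m : ℕ} (hm : m = 1) :
    ∃ (U : Matrix M (Fin m) K) (V : Matrix (Fin m) P K) (W : Matrix P (Fin m) K),
      A = U * V ∧ V * W = 1 ∧ ∀ β b, V β b = 1 := by
  subst hm
  refine ⟨Matrix.of fun a _ => A a default, Matrix.of fun _ _ => 1, Matrix.of fun _ _ => 1,
    ?_, ?_, fun _ _ => rfl⟩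
  · ext a b
    simp [Matrix.mul_apply, Unique.eq_default b]
  · ext β β'
    obtain rfl := Subsingleton.elim β β'
    simp [Matrix.mul_apply]

section TensorTrain

variable {d n : ℕ}

theorem unfold_submatrix_snoc (F : (Fin d → Fin n) → ℝ) {k : ℕ} (hk : k + 1 ≤ d) (x : Fin n) :
    (unfold F (k + 1) hk).submatrix (Fin.snoc · x) id
      = (unfold F k (by omega)).submatrix id (fun b => Fin.cons x b ∘ Fin.cast (by omega)) := by
  ext a b
  simp only [Matrix.submatrix_apply, id, unfold]
  congr 1
  funext m
  rcases lt_trichotomy (m : ℕ) k with h | h | h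
  · simp [h, Nat.lt_succ_of_lt h, Fin.snoc]
  · simp [h, Fin.snoc]
  · have h1 : ¬ (m : ℕ) < k + 1 := by omega
    have h2 : ¬ (m : ℕ) < k := by omega
    obtain ⟨j, hj⟩ : ∃ j, (m : ℕ) - k = j + 1 := ⟨(m : ℕ) - k - 1, by omega⟩
    simp only [h1, h2, dite_false, Function.comp_apply, Fin.cast_mk, hj]
    change b _ = b ⟨j, by omega⟩
    congr 1
    ext
    simp only
    omega

section Prefix

variable (r : ℕ → ℕ) (G : ∀ j : Fin d, Fin n → Matrix (Fin (r j)) (Fin (r (j + 1))) ℝ)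

/-- `ttPrefix r G k hk a β = ∑ α₀, (G 0 (a 0) * ⋯ * G (k - 1) (a (k - 1))) α₀ β`. -/
noncomputable def ttPrefix (k : ℕ) (hk : k ≤ d) : Matrix (Fin k → Fin n) (Fin (r k)) ℝ :=
  fun a β => ∑ α : ∀ m : Fin (k + 1), Fin (r m),
    if α (Fin.last k) = β then ∏ j : Fin k, G ⟨j, by omega⟩ (a j) (α j.castSucc) (α j.succ)
    else 0

theorem ttVal_eq_sum_ttPrefix (i : Fin d → Fin n) :
    ttVal r G i = ∑ β, ttPrefix r G d le_rfl i β := by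
  unfold ttPrefix
  rw [Finset.sum_comm]
  refine Finset.sum_congr rfl fun α _ => ?_
  simp [Finset.sum_ite_eq]

theorem ttPrefix_zero (a : Fin 0 → Fin n) (β : Fin (r 0)) :
    ttPrefix r G 0 (Nat.zero_le d) a β = 1 := by
  rw [ttPrefix, Finset.sum_eq_single (fun _ => Fin.cast (by simp) β)]
  · simp
  · intro α _ hα
    rw [if_neg]
    rintro rfl
    exact hα (funext fun m => by obtain rfl : m = Fin.last 0 := Fin.ext (by omega); rfl)
  · simp

theorem ttPrefix_succ {k : ℕ} (hk : k + 1 ≤ d) (x : Fin n) :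
    (ttPrefix r G (k + 1) hk).submatrix (Fin.snoc · x) id
      = ttPrefix r G k (by omega) * G ⟨k, hk⟩ x := by
  ext a β
  simp only [Matrix.submatrix_apply, id, Matrix.mul_apply, ttPrefix, Finset.sum_mul, ite_mul,
    zero_mul]
  rw [Finset.sum_comm, ← (Fin.snocEquiv (fun m : Fin (k + 2) => Fin (r m))).sum_comp,
    Fintype.sum_prod_type, Finset.sum_comm]
  refine Finset.sum_congr rfl fun α _ => ?_
  simp [Fin.snocEquiv, Fin.prod_univ_castSucc, Finset.sum_ite_eq, Fin.succ_castSucc,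
    -Fin.castSucc_succ]

end Prefix

noncomputable def ttCore {ι κ : Type*} {k : ℕ} (hk : k + 1 ≤ d)
    (V : Matrix ι (Fin (d - k) → Fin n) ℝ) (W : Matrix (Fin (d - (k + 1)) → Fin n) κ ℝ)
    (x : Fin n) : Matrix ι κ ℝ :=
  V.submatrix id (fun b => Fin.cons x b ∘ Fin.cast (by omega)) * W

theorem submatrix_snoc_eq_mul_ttCore (F : (Fin d → Fin n) → ℝ) {k : ℕ} (hk : k + 1 ≤ d)
    {ι κ : Type*} [Fintype ι] [Fintype κ] [DecidableEq κ] {U₀ : Matrix (Fin k → Fin n) ι ℝ}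
    {V₀ : Matrix ι (Fin (d - k) → Fin n) ℝ} {U₁ : Matrix (Fin (k + 1) → Fin n) κ ℝ}
    {V₁ : Matrix κ (Fin (d - (k + 1)) → Fin n) ℝ} {W : Matrix (Fin (d - (k + 1)) → Fin n) κ ℝ}
    (h₀ : unfold F k (by omega) = U₀ * V₀) (h₁ : unfold F (k + 1) hk = U₁ * V₁)
    (hW : V₁ * W = 1) (x : Fin n) :
    U₁.submatrix (Fin.snoc · x) id = U₀ * ttCore hk V₀ W x := by
  calc U₁.submatrix (Fin.snoc · x) id
      = (unfold F (k + 1) hk * W).submatrix (Fin.snoc · x) id := by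
        rw [h₁, Matrix.mul_assoc, hW, Matrix.mul_one]
    _ = (unfold F (k + 1) hk).submatrix (Fin.snoc · x) id * W := rfl
    _ = U₀ * ttCore hk V₀ W x := by
        rw [unfold_submatrix_snoc, h₀, ttCore]
        exact Matrix.mul_assoc U₀ _ W

theorem exists_ttVal_eq_of_unfold_eq_mul (F : (Fin d → Fin n) → ℝ) (r : ℕ → ℕ)
    (U : ∀ k, k ≤ d → Matrix (Fin k → Fin n) (Fin (r k)) ℝ)
    (V : ∀ k, k ≤ d → Matrix (Fin (r k)) (Fin (d - k) → Fin n) ℝ)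
    (W : ∀ k, k + 1 ≤ d → Matrix (Fin (d - (k + 1)) → Fin n) (Fin (r (k + 1))) ℝ)
    (hUV : ∀ k hk, unfold F k hk = U k hk * V k hk)
    (hVW : ∀ k hk, V (k + 1) hk * W k hk = 1)
    (hU : ∀ a β, U 0 (Nat.zero_le d) a β = 1) (hV : ∀ β b, V d le_rfl β b = 1) :
    ∃ G : ∀ j : Fin d, Fin n → Matrix (Fin (r j)) (Fin (r (j + 1))) ℝ,
      ∀ i, ttVal r G i = F i := by
  let G : ∀ j : Fin d, Fin n → Matrix (Fin (r j)) (Fin (r (j + 1))) ℝ :=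
    fun j => ttCore j.2 (V j j.2.le) (W j j.2)
  have hprefix : ∀ k (hk : k ≤ d), ttPrefix r G k hk = U k hk := by
    intro k
    induction k with
    | zero => intro hk; ext a β; rw [ttPrefix_zero, hU]
    | succ k ih =>
      intro hk
      have hx : ∀ x, (ttPrefix r G (k + 1) hk).submatrix (Fin.snoc · x) id
          = (U (k + 1) hk).submatrix (Fin.snoc · x) id := fun x => by
        rw [ttPrefix_succ, ih, submatrix_snoc_eq_mul_ttCore F hk (hUV k _) (hUV (k + 1) hk)
          (hVW k hk)]
      ext a β
      simpa only [Matrix.submatrix_apply, id, Fin.snoc_init_self] using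
        congrFun₂ (hx (a (Fin.last k))) (Fin.init a) β
  have : IsEmpty (Fin (d - d)) := by rw [Nat.sub_self]; infer_instance
  refine ⟨G, fun i => ?_⟩
  calc ttVal r G i = ∑ β, U d le_rfl i β * V d le_rfl β isEmptyElim := by
        simp only [ttVal_eq_sum_ttPrefix, hprefix, hV, mul_one]
    _ = F i := by
        rw [← Matrix.mul_apply, ← hUV]
        simp [unfold]

noncomputable def ttRank (F : (Fin d → Fin n) → ℝ) (k : ℕ) : ℕ :=
  if h : 1 ≤ k ∧ k ≤ d - 1 then (unfold F k (by omega)).rank else 1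

theorem ttRank_eq_rank (F : (Fin d → Fin n) → ℝ) {k : ℕ} (h1 : 1 ≤ k) (h2 : k ≤ d - 1) :
    ttRank F k = (unfold F k (by omega)).rank :=
  dif_pos ⟨h1, h2⟩

theorem ttRank_zero (F : (Fin d → Fin n) → ℝ) : ttRank F 0 = 1 :=
  dif_neg (by omega)

theorem ttRank_self (F : (Fin d → Fin n) → ℝ) (hd : 1 ≤ d) : ttRank F d = 1 :=
  dif_neg (by omega)

theorem exists_unfold_eq_mul_ttRank (F : (Fin d → Fin n) → ℝ) (hd : 1 ≤ d) (k : ℕ)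
    (hk : k ≤ d) :
    ∃ (U : Matrix (Fin k → Fin n) (Fin (ttRank F k)) ℝ)
      (V : Matrix (Fin (ttRank F k)) (Fin (d - k) → Fin n) ℝ),
      unfold F k hk = U * V ∧
      (1 ≤ k → ∃ W : Matrix (Fin (d - k) → Fin n) (Fin (ttRank F k)) ℝ, V * W = 1) ∧
      (k = 0 → ∀ a β, U a β = 1) ∧ (k = d → ∀ β b, V β b = 1) := by
  rcases Nat.eq_zero_or_pos k with rfl | hk0
  · obtain ⟨U, V, hUV, hU⟩ := (unfold F 0 hk).exists_eq_mul_of_unique_rows (ttRank_zero F)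
    exact ⟨U, V, hUV, by omega, fun _ => hU, by omega⟩
  rcases hk.eq_or_lt with rfl | hkd
  · have : IsEmpty (Fin (k - k)) := by rw [Nat.sub_self]; infer_instance
    obtain ⟨U, V, W, hUV, hVW, hV⟩ :=
      (unfold F k hk).exists_eq_mul_of_unique_cols (ttRank_self F hd)
    exact ⟨U, V, hUV, fun _ => ⟨W, hVW⟩, by omega, fun _ => hV⟩
  · obtain ⟨U, V, W, hUV, hVW⟩ := (unfold F k hk).exists_mul_eq_and_mul_eq_one_of_rank_eq
      (ttRank_eq_rank F hk0 (by omega)).symm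
    exact ⟨U, V, hUV, fun _ => ⟨W, hVW⟩, by omega, by omega⟩

end TensorTrain

theorem stmt_14 (d n : ℕ) (hd : 1 ≤ d) (F : (Fin d → Fin n) → ℝ) :
    ∃ (r : ℕ → ℕ) (G : ∀ j : Fin d, Fin n → Matrix (Fin (r j)) (Fin (r (j + 1))) ℝ),
      r 0 = 1 ∧ r d = 1 ∧
      (∀ k (h1 : 1 ≤ k) (h2 : k ≤ d - 1),
        r k = Matrix.rank (unfold F k (by omega))) ∧
      (∀ i, ttVal r G i = F i) := by
  choose U V hUV hW hU hV using exists_unfold_eq_mul_ttRank F hd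
  choose W hW using hW
  obtain ⟨G, hG⟩ := exists_ttVal_eq_of_unfold_eq_mul F (ttRank F) U V
    (fun k hk => W (k + 1) hk k.succ_pos) hUV (fun k hk => hW (k + 1) hk k.succ_pos)
    (hU 0 _ rfl) (hV d le_rfl rfl)
  exact ⟨ttRank F, G, ttRank_zero F, ttRank_self F hd, fun k h1 h2 => ttRank_eq_rank F h1 h2, hG⟩
end
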